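/- arXiv:1505.02312 — 7 statements merged into one kernel-verified Lean document; each statement's English description precedes it below -/
import Mathlib

section
/- Let R be a ring, p ∈ R with inner inverse q (pqp = p). If 1 ∈ pR + Rp, then pqqp = pq + qp − 1 in R. -/
/-! `1 - pq` annihilates `p` on the left and `1 - qp` on the right, so inserting
`1 = ps + tp` between them gives `(1 - pq)(1 - qp) = 0`, which expands to the identity. -/

theorem one_sub_mul_mul_eq_zero {R : Type*} [Ring R] {p q : R} (h : p * q * p = p) :
    (1 - p * q) * p = 0 := by
  rw [sub_mul, one_mul, h, sub_self]

theorem mul_one_sub_mul_eq_zero {R : Type*} [Ring R] {p q : R} (h : p * q * p = p) :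
    p * (1 - q * p) = 0 := by
  rw [mul_sub, mul_one, ← mul_assoc, h, sub_self]

theorem mul_eq_zero_of_one_eq_mul_add_mul {R : Type*} [Ring R] {p a b s t : R}
    (ha : a * p = 0) (hb : p * b = 0) (hst : 1 = p * s + t * p) : a * b = 0 :=
  calc a * b = a * (p * s + t * p) * b := by rw [← hst, mul_one]
    _ = a * p * (s * b) + a * t * (p * b) := by noncomm_ring
    _ = 0 := by rw [ha, hb, zero_mul, mul_zero, add_zero]

/-- If `p*q*p = p` and `1 ∈ pR + Rp`, then `p*q*q*p = p*q + q*p - 1`. -/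
theorem stmt_3 {R : Type*} [Ring R] (p q : R) (h : p * q * p = p)
    (h1 : ∃ s t : R, (1 : R) = p * s + t * p) :
    p * q * q * p = p * q + q * p - 1 := by
  obtain ⟨s, t, hst⟩ := h1
  have hzero : (1 - p * q) * (1 - q * p) = 0 :=
    mul_eq_zero_of_one_eq_mul_add_mul (one_sub_mul_mul_eq_zero h) (mul_one_sub_mul_eq_zero h) hst
  linear_combination (norm := noncomm_ring) hzero
end

section
/- Let R be a ring, p ∈ R, and q an inner inverse of p (pqp = p). Then for any x ∈ R, x ∈ pR + Rp if and only if (1 − pq)·x·(1 − qp) = 0. -/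
/-!
Since `p * q * p = p`, the idempotent `1 - p * q` annihilates `p` on the left and `1 - q * p`
annihilates it on the right, so `x ↦ (1 - p * q) * x * (1 - q * p)` kills `p * R + R * p`.
Conversely, for every `q` the difference `x - (1 - p * q) * x * (1 - q * p)` equals
`p * (q * x) + (x * q - p * q * x * q) * p`, which lies in `p * R + R * p`.
-/

section InnerInverse

variable {R : Type*} [Ring R]

theorem one_sub_mul_mul_self_eq_zero {p q : R} (h : p * q * p = p) : (1 - p * q) * p = 0 := by
  rw [sub_mul, one_mul, h, sub_self]

theorem self_mul_one_sub_mul_eq_zero {p q : R} (h : p * q * p = p) : p * (1 - q * p) = 0 := by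
  rw [mul_sub, mul_one, ← mul_assoc, h, sub_self]

theorem sub_one_sub_mul_mul_one_sub_mul (p q x : R) :
    x - (1 - p * q) * x * (1 - q * p) = p * (q * x) + (x * q - p * q * x * q) * p := by
  noncomm_ring

theorem one_sub_mul_mul_add_mul_mul_one_sub_eq_zero {p q : R} (h : p * q * p = p) (y z : R) :
    (1 - p * q) * (p * y + z * p) * (1 - q * p) = 0 :=
  calc (1 - p * q) * (p * y + z * p) * (1 - q * p)
      = (1 - p * q) * p * (y * (1 - q * p)) + (1 - p * q) * z * (p * (1 - q * p)) := by
        noncomm_ring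
    _ = 0 := by
        rw [one_sub_mul_mul_self_eq_zero h, self_mul_one_sub_mul_eq_zero h, zero_mul, mul_zero,
          add_zero]

end InnerInverse

/-- If `p*q*p = p`, then `x ∈ pR + Rp` iff `(1 - p*q) * x * (1 - q*p) = 0`. -/
theorem stmt_5 {R : Type*} [Ring R] (p q : R) (h : p * q * p = p) (x : R) :
    (∃ y z : R, x = p * y + z * p) ↔ (1 - p * q) * x * (1 - q * p) = 0 := by
  constructor
  · rintro ⟨y, z, rfl⟩
    exact one_sub_mul_mul_add_mul_mul_one_sub_eq_zero h y z
  · intro hx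
    refine ⟨q * x, x * q - p * q * x * q, ?_⟩
    rw [← sub_one_sub_mul_mul_one_sub_mul, hx, sub_zero]
end

section
/- Let K be a von Neumann regular commutative ring, M a K-module, and x a nonzero element of M. Then there exists a maximal ideal P of K such that x ∉ PM. -/
/-!
Regularity lets every element `x` of `I • N` be fixed by some `e ∈ I`: for `x = r • n` take
`e = r * b` with `r = r ^ 2 * b`, and for a sum `y + z` combine the witnesses as `e + f - e * f`.
If `x ≠ 0`, its annihilator lies in a maximal ideal `P`; were `x ∈ P • M` with `e • x = x`,
`e ∈ P`, then `1 - e` would annihilate `x`, so `1 ∈ P`.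
-/

theorem exists_mem_smul_eq_self_of_mem_smul {K : Type*} [CommRing K]
    (hreg : ∀ a : K, ∃ b : K, a = a ^ 2 * b) {M : Type*} [AddCommGroup M] [Module K M]
    {I : Ideal K} {N : Submodule K M} {x : M} (hx : x ∈ I • N) :
    ∃ e ∈ I, e • x = x := by
  induction hx using Submodule.smul_induction_on' with
  | smul r hr n _ =>
    obtain ⟨b, hb⟩ := hreg r
    refine ⟨r * b, I.mul_mem_right b hr, ?_⟩
    rw [smul_smul, show r * b * r = r ^ 2 * b by ring, ← hb]
  | add y _ z _ hy hz =>
    obtain ⟨e, heI, hey⟩ := hy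
    obtain ⟨f, hfI, hfz⟩ := hz
    refine ⟨e + f - e * f, I.sub_mem (I.add_mem heI hfI) (I.mul_mem_right f heI), ?_⟩
    have hefy : (e * f) • y = f • y := by rw [mul_comm, mul_smul, hey]
    have hefz : (e * f) • z = e • z := by rw [mul_smul, hfz]
    rw [smul_add, sub_smul, sub_smul, add_smul, add_smul, hefy, hefz, hey, hfz]
    abel

/-- If `K` is a von Neumann regular commutative ring, `M` a `K`-module and `x ∈ M`
nonzero, then `x ∉ PM` for some maximal ideal `P` of `K`. -/
theorem stmt_9 {K : Type*} [CommRing K] (hreg : ∀ a : K, ∃ b : K, a = a ^ 2 * b)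
    {M : Type*} [AddCommGroup M] [Module K M] (x : M) (hx : x ≠ 0) :
    ∃ P : Ideal K, P.IsMaximal ∧ x ∉ (P • (⊤ : Submodule K M) : Submodule K M) := by
  have hann : (K ∙ x).annihilator ≠ ⊤ := by
    rwa [Ne, Submodule.annihilator_eq_top_iff, Submodule.span_singleton_eq_bot]
  obtain ⟨P, hP, hannP⟩ := Ideal.exists_le_maximal _ hann
  refine ⟨P, hP, fun hxP => hP.ne_top ?_⟩
  obtain ⟨e, heP, hex⟩ := exists_mem_smul_eq_self_of_mem_smul hreg hxP
  have hone_sub_mem : 1 - e ∈ P :=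
    hannP <| (Submodule.mem_annihilator_span_singleton x _).2 <| by
      rw [sub_smul, one_smul, hex, sub_self]
  exact P.eq_top_iff_one.2 (by simpa using P.add_mem hone_sub_mem heP)
end

section
/- Let K be a commutative ring such that for every ideal I of K and every element p̄ ∈ K/I, the K-algebra K/I can be embedded in a K-algebra in which p̄ has an inner inverse. Then K is von Neumann regular. -/
/-! An element with a commuting inner inverse is a multiple of its own square, so it cannot be a
nonzero square-zero element. In `K ⧸ (p²)` the image of `p` squares to zero, and its inner inverse
in any `K`-algebra commutes with it because the image of `p` is `algebraMap K A p`. Hence `p` lies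
in `(p²)`. -/

universe u

/-- Data witnessing that the `K`-algebra `K ⧸ I` embeds in a `K`-algebra in which the
image of `p` has an inner inverse. -/
structure InnerInverseEmbedding (K : Type u) [CommRing K] (I : Ideal K) (p : K ⧸ I) where
  A : Type u
  [ringA : Ring A]
  [algA : Algebra K A]
  emb : (K ⧸ I) →ₐ[K] A
  inj : Function.Injective emb
  q : A
  inner : emb p * q * emb p = emb p

theorem eq_zero_of_mul_self_eq_zero_of_mul_mul_self_eq {A : Type*} [SemigroupWithZero A]
    {a q : A} (hcomm : Commute a q) (hsq : a * a = 0) (hinner : a * q * a = a) : a = 0 :=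
  calc a = a * q * a := hinner.symm
    _ = a * a * q := by rw [mul_assoc, ← hcomm.eq, mul_assoc]
    _ = 0 := by rw [hsq, zero_mul]

namespace InnerInverseEmbedding

attribute [local instance] ringA algA

variable {K : Type u} [CommRing K] {I : Ideal K} {p : K ⧸ I}

theorem commute_emb (E : InnerInverseEmbedding K I p) (x : K ⧸ I) (b : E.A) :
    Commute (E.emb x) b := by
  obtain ⟨y, rfl⟩ := Ideal.Quotient.mk_surjective x
  exact E.emb.commutes y ▸ Algebra.commutes y b

theorem eq_zero_of_mul_self_eq_zero (E : InnerInverseEmbedding K I p) (hp : p * p = 0) :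
    p = 0 :=
  E.inj <| by
    rw [map_zero]
    exact eq_zero_of_mul_self_eq_zero_of_mul_mul_self_eq (E.commute_emb p E.q)
      (by rw [← map_mul, hp, map_zero]) E.inner

end InnerInverseEmbedding

/-- If for every ideal `I` of the commutative ring `K` and every `p ∈ K ⧸ I` the
`K`-algebra `K ⧸ I` embeds in a `K`-algebra in which `p` acquires an inner inverse,
then `K` is von Neumann regular. -/
theorem stmt_10 (K : Type u) [CommRing K]
    (h : ∀ (I : Ideal K) (p : K ⧸ I), Nonempty (InnerInverseEmbedding K I p)) :
    ∀ p : K, ∃ q : K, p = p ^ 2 * q := by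
  intro p
  let I := Ideal.span {p ^ 2}
  obtain ⟨E⟩ := h I (Ideal.Quotient.mk I p)
  have hsq : Ideal.Quotient.mk I p * Ideal.Quotient.mk I p = 0 := by
    rw [← map_mul, ← sq, Ideal.Quotient.eq_zero_iff_mem]
    exact Ideal.mem_span_singleton_self _
  have hp : p ∈ I := Ideal.Quotient.eq_zero_iff_mem.mp (E.eq_zero_of_mul_self_eq_zero hsq)
  exact Ideal.mem_span_singleton.mp hp
end

section
/- Let K be a commutative ring with the property that for every K-module M and every nonzero x ∈ M there is a maximal ideal P of K with x ∉ PM. Then every K-algebra R embeds in a von Neumann regular K-algebra. -/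
universe u v

/-- Data witnessing that the `K`-algebra `R` embeds in a von Neumann regular
`K`-algebra. -/
structure VNREmbedding (K : Type v) [CommRing K] (R : Type u) [Ring R] [Algebra K R] where
  S : Type u
  [ringS : Ring S]
  [algS : Algebra K S]
  regular : ∀ s : S, ∃ t : S, s * t * s = s
  emb : R →ₐ[K] S
  inj : Function.Injective emb

/-!
For a maximal ideal `P` of `K`, the quotient `R ⧸ P • R` is a vector space over the field `K ⧸ P`,
so its `K`-linear endomorphisms are those over `K ⧸ P`, and these form a von Neumann regular
ring. Left multiplication makes `R` act on each such quotient, and the hypothesis on `K`, applied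
to the `K`-module `R`, gives for every `r ≠ 0` a maximal ideal `P` with `r ∉ P • R`, i.e. `r`
acts nontrivially on the class of `1`. Hence `R` embeds in the product of these endomorphism
rings, one factor for each nonzero `r`.
-/

open Submodule

namespace Module.End

theorem exists_mul_mul_eq_self {F V : Type*} [DivisionRing F] [AddCommGroup V] [Module F V]
    (f : Module.End F V) : ∃ g : Module.End F V, f * g * f = f := by
  obtain ⟨s, hs⟩ := f.rangeRestrict.exists_rightInverse_of_surjective f.range_rangeRestrict
  obtain ⟨π, hπ⟩ := (LinearMap.range f).subtype.exists_leftInverse_of_injective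
    (LinearMap.range f).ker_subtype
  refine ⟨s ∘ₗ π, LinearMap.ext fun x => ?_⟩
  have hπx : π (f x) = f.rangeRestrict x := LinearMap.congr_fun hπ (f.rangeRestrict x)
  have hfs : f.rangeRestrict (s (π (f x))) = π (f x) := LinearMap.congr_fun hs _
  simpa [hπx] using congrArg Subtype.val hfs

theorem exists_mul_mul_eq_self_of_surjective {K F V : Type*} [CommRing K] [DivisionRing F]
    [Algebra K F] [AddCommGroup V] [Module K V] [Module F V] [IsScalarTower K F V]
    (hK : Function.Surjective (algebraMap K F)) (f : Module.End K V) :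
    ∃ g : Module.End K V, f * g * f = f := by
  obtain ⟨g, hg⟩ := exists_mul_mul_eq_self (f.extendScalarsOfSurjective hK)
  exact ⟨g.restrictScalars K, LinearMap.ext fun x => LinearMap.congr_fun hg x⟩

variable {K M : Type*} [CommRing K] [AddCommGroup M] [Module K M]

theorem exists_mul_mul_eq_self_of_isMaximal (P : Ideal K) [P.IsMaximal]
    (f : Module.End K (M ⧸ P • (⊤ : Submodule K M))) : ∃ g, f * g * f = f :=
  letI := Ideal.Quotient.field P
  exists_mul_mul_eq_self_of_surjective (F := K ⧸ P) Ideal.Quotient.mk_surjective f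

noncomputable def mapQSMulTop (P : Ideal K) :
    Module.End K M →ₐ[K] Module.End K (M ⧸ P • (⊤ : Submodule K M)) where
  toFun f := mapQ (P • ⊤) (P • ⊤) f (smul_top_le_comap_smul_top P f)
  map_one' := mapQ_id _
  map_mul' f g := mapQ_comp _ _ _ g f _ _
  map_zero' := by ext; rfl
  map_add' f g := by ext; rfl
  commutes' k := by ext; rfl

@[simp]
theorem mapQSMulTop_apply_mk (P : Ideal K) (f : Module.End K M) (x : M) :
    mapQSMulTop P f (Submodule.Quotient.mk x) = Submodule.Quotient.mk (f x) := rfl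

end Module.End

theorem mapQSMulTop_lmul_ne_zero {K R : Type*} [CommRing K] [Ring R] [Algebra K R] {P : Ideal K}
    {r : R} (hr : r ∉ P • (⊤ : Submodule K R)) :
    Module.End.mapQSMulTop P (Algebra.lmul K R r) ≠ 0 := by
  intro h
  have := LinearMap.congr_fun h (Submodule.Quotient.mk 1)
  rw [Module.End.mapQSMulTop_apply_mk, Algebra.coe_lmul_eq_mul, LinearMap.mul_apply', mul_one,
    LinearMap.zero_apply, Submodule.Quotient.mk_eq_zero] at this
  exact hr this

/-- If `K` is a commutative ring such that every nonzero element `x` of any `K`-module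
avoids `PM` for some maximal ideal `P`, then every `K`-algebra embeds in a von Neumann
regular `K`-algebra. -/
theorem stmt_11 {K : Type v} [CommRing K]
    (h : ∀ (M : Type u) [AddCommGroup M] [Module K M] (x : M), x ≠ 0 →
      ∃ P : Ideal K, P.IsMaximal ∧ x ∉ (P • (⊤ : Submodule K M) : Submodule K M))
    (R : Type u) [Ring R] [Algebra K R] :
    Nonempty (VNREmbedding K R) := by
  choose P hP hrP using fun r : {r : R // r ≠ 0} => h R r.1 r.2
  let S := ∀ r : {r : R // r ≠ 0}, Module.End K (R ⧸ P r • (⊤ : Submodule K R))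
  let ρ : R →ₐ[K] S := AlgHom.pi fun r => (Module.End.mapQSMulTop (P r)).comp (Algebra.lmul K R)
  have hS : ∀ s : S, ∃ t, s * t * s = s := fun s => by
    choose t ht using fun r =>
      have := hP r
      Module.End.exists_mul_mul_eq_self_of_isMaximal (P r) (s r)
    exact ⟨t, funext ht⟩
  have hρ : Function.Injective ρ := (injective_iff_map_eq_zero ρ).2 fun r hr => by
    by_contra hr0
    exact mapQSMulTop_lmul_ne_zero (hrP ⟨r, hr0⟩) (congrFun hr ⟨r, hr0⟩)
  exact ⟨⟨S, hS, ρ, hρ⟩⟩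
end

section
/- Let n ≥ 1, let A and A' be abelian groups, μ : Aⁿ → A' an n-multilinear (i.e., additive in each argument) map, and x, y ∈ A. Consider all tuples (a₁,…,aₙ) with each aᵢ ∈ {x, y, x+y} satisfying: (i) if aᵢ = x with i < n then a_{i+1} = y; (ii) if aⱼ = y with j > 1 then a_{j−1} = x. To each such tuple assign the sign (−1)^d where d is the number of occurrences of the consecutive pattern (x, y) plus the number of occurrences of y in position 1 plus the number of occurrences of x in position n. Then the signed sum Σ (−1)^d μ(a₁,…,aₙ) over all such tuples equals 0. -/
open scoped Classical

/-- The three allowed entries: `0 ↦ x`, `1 ↦ y`, `2 ↦ x + y` (treated as formally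
distinct even if they coincide in `A`). -/
def entryVal {A : Type*} [AddCommGroup A] (x y : A) : Fin 3 → A := ![x, y, x + y]

/-- A tuple (encoded by `c : Fin n → Fin 3`) is admissible if every nonfinal `x` is
immediately followed by `y`, and every noninitial `y` is immediately preceded by `x`. -/
def IsAdmissible (n : ℕ) (c : Fin n → Fin 3) : Prop :=
  ∀ (i : Fin n) (h : i.val + 1 < n), c i = 0 ↔ c ⟨i.val + 1, h⟩ = 1

/-- `d`: the number of occurrences of the consecutive pattern `(x, y)`, plus `1` if the
first entry is `y`, plus `1` if the last entry is `x`. -/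
noncomputable def signExp (n : ℕ) (hn : 1 ≤ n) (c : Fin n → Fin 3) : ℕ :=
  (Finset.univ.filter
      (fun i : Fin n => ∃ h : i.val + 1 < n, c i = 0 ∧ c ⟨i.val + 1, h⟩ = 1)).card
    + (if c ⟨0, hn⟩ = 1 then 1 else 0)
    + (if c ⟨n - 1, by omega⟩ = 0 then 1 else 0)

/-!
Expanding every entry `x + y` by multilinearity turns the sum into `∑ w, s(w) • μ w` over
the words `w ∈ {x, y}ⁿ`, where `s(w)` is the signed count of the admissible tuples that
expand to `w`. For a word `w` of positive length pick a segment: a leading `y`, a trailing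
`x`, or an adjacent pair `x y`. Swapping the entries of that segment with `x + y` maps the
admissible tuples over `w` to themselves and changes `d` by one, so it is a sign-reversing
involution and `s(w) = 0`.
-/

lemma Finset.sum_neg_one_pow_eq_zero_of_involution {α : Type*} {s : Finset α} {d : α → ℕ}
    (g : α → α) (hmem : ∀ a ∈ s, g a ∈ s) (hinv : ∀ a ∈ s, g (g a) = a)
    (hodd : ∀ a ∈ s, Odd (d a + d (g a))) :
    ∑ a ∈ s, (-1 : ℤ) ^ d a = 0 := by
  refine Finset.sum_involution (fun a _ => g a) (fun a ha => ?_) (fun a ha _ hfix => ?_) hmem hinv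
  · have h := hodd a ha
    rcases Nat.even_or_odd (d a) with he | ho
    · rw [he.neg_one_pow, ((Nat.odd_add'.1 h).2 he).neg_one_pow]; norm_num
    · rw [ho.neg_one_pow, ((Nat.odd_add.1 h).1 ho).neg_one_pow]; norm_num
  · have := hodd a ha
    rw [hfix, ← two_mul] at this
    exact Nat.not_odd_iff_even.2 (even_two_mul _) this

section

variable {n : ℕ} {w : Fin n → Fin 2} {B : Finset (Fin n)} {c : Fin n → Fin 3}

/-- The letters (`0 ↦ x`, `1 ↦ y`) into which the entry `k` expands. -/
def letters : Fin 3 → Finset (Fin 2) := ![{0}, {1}, Finset.univ]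

lemma mem_letters {a : Fin 2} {k : Fin 3} : a ∈ letters k ↔ k = a.castSucc ∨ k = 2 := by
  revert a k; decide

lemma entryVal_eq_sum_letters {A : Type*} [AddCommGroup A] (x y : A) (k : Fin 3) :
    entryVal x y k = ∑ j ∈ letters k, ![x, y] j := by
  fin_cases k <;> simp [entryVal, letters, Fin.sum_univ_two]

def Covers (w : Fin n → Fin 2) (c : Fin n → Fin 3) : Prop := ∀ i, w i ∈ letters (c i)

def toggle (w : Fin n → Fin 2) (B : Finset (Fin n)) (c : Fin n → Fin 3) : Fin n → Fin 3 :=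
  fun i => if i ∈ B then Equiv.swap (w i).castSucc 2 (c i) else c i

lemma toggle_toggle : toggle w B (toggle w B c) = c := by
  funext i
  by_cases hi : i ∈ B <;> simp [toggle, hi]

lemma covers_toggle (hc : Covers w c) : Covers w (toggle w B c) := by
  intro i
  have key : ∀ (a : Fin 2) (k : Fin 3),
      a ∈ letters k → a ∈ letters (Equiv.swap a.castSucc 2 k) := by decide
  by_cases hi : i ∈ B <;> simp only [toggle, hi, if_true, if_false]
  exacts [key _ _ (hc i), hc i]

def weight (i : Fin n) (k : Fin 3) : ℕ := if k = 0 ∨ (i.val = 0 ∧ k = 1) then 1 else 0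

lemma card_filter_eq_zero_of_isAdmissible (hn : 1 ≤ n) (hc : IsAdmissible n c) :
    (Finset.univ.filter (fun i => c i = 0)).card =
      (Finset.univ.filter
        (fun i : Fin n => ∃ h : i.val + 1 < n, c i = 0 ∧ c ⟨i.val + 1, h⟩ = 1)).card
      + if c ⟨n - 1, by omega⟩ = 0 then 1 else 0 := by
  rw [← Finset.card_filter_add_card_filter_not (p := fun i : Fin n => i.val + 1 < n),
    Finset.filter_filter, Finset.filter_filter]
  congr 1
  · congr 1
    ext i
    simp only [Finset.mem_filter, Finset.mem_univ, true_and]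
    exact ⟨fun ⟨h0, h⟩ => ⟨h, h0, (hc i h).1 h0⟩, fun ⟨h, h0, _⟩ => ⟨h0, h⟩⟩
  · have hlast : ∀ i : Fin n, ¬ i.val + 1 < n ↔ i = ⟨n - 1, by omega⟩ := fun i => by
      have := i.isLt; simp only [Fin.ext_iff]; omega
    simp only [hlast, and_comm (a := c _ = 0), Finset.filter_and, Finset.filter_eq',
      Finset.mem_univ, if_true]
    split_ifs with h <;> simp [h]

/-- In an admissible tuple every `x` but a final one is followed by `y`, so `d` counts the `x`s
and a leading `y`. -/
lemma signExp_eq_sum_weight (hn : 1 ≤ n) (hc : IsAdmissible n c) :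
    signExp n hn c = ∑ i, weight i (c i) := by
  have hsplit : ∀ i, weight i (c i) =
      (if c i = 0 then 1 else 0) + if i = ⟨0, hn⟩ then (if c i = 1 then 1 else 0) else 0 := by
    intro i
    simp only [weight, Fin.ext_iff]
    split_ifs <;> simp_all
  simp only [hsplit, Finset.sum_add_distrib, Finset.sum_boole, Finset.sum_ite_eq',
    Finset.mem_univ, if_true, signExp, card_filter_eq_zero_of_isAdmissible hn hc, Nat.cast_id]
  ring

/-- Swapping the entries on `B` with `x + y` keeps tuples over `w` admissible: `B` is a union of
segments of `w` that are a leading `y`, a trailing `x` or a pair `x y`. -/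
def IsBlock (w : Fin n → Fin 2) (B : Finset (Fin n)) : Prop :=
  ∀ (i : Fin n) (h : i.val + 1 < n),
    (i ∈ B → (w i = 0 ↔ (⟨i.val + 1, h⟩ : Fin n) ∈ B)) ∧
    ((⟨i.val + 1, h⟩ : Fin n) ∈ B → (w ⟨i.val + 1, h⟩ = 1 ↔ i ∈ B))

lemma isAdmissible_toggle (hB : IsBlock w B) (hc : IsAdmissible n c) (hcov : Covers w c) :
    IsAdmissible n (toggle w B c) := by
  intro i h
  obtain ⟨hl, hr⟩ := hB i h
  have hci := mem_letters.1 (hcov i)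
  have hcj := mem_letters.1 (hcov ⟨i.val + 1, h⟩)
  have hcij := hc i h
  by_cases hiB : i ∈ B <;> by_cases hjB : (⟨i.val + 1, h⟩ : Fin n) ∈ B <;>
    simp only [toggle, hiB, hjB, if_true, if_false, iff_true, iff_false,
      forall_const, IsEmpty.forall_iff] at hl hr ⊢
  all_goals
    generalize c i = a at *
    generalize c ⟨i.val + 1, h⟩ = b at *
    generalize w i = u at *
    generalize w ⟨i.val + 1, h⟩ = v at *
    revert a b u v
    decide

lemma weight_add_weight_toggle (hcov : Covers w c) (i : Fin n) :
    weight i (c i) + weight i (toggle w B c i) =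
      if i ∈ B then weight i (w i).castSucc else 2 * weight i (c i) := by
  by_cases hi : i ∈ B
  · have hw2 : weight i 2 = 0 := by simp [weight]
    rcases mem_letters.1 (hcov i) with h | h <;> simp [toggle, hi, h, hw2]
  · simp [toggle, hi, two_mul]

lemma odd_signExp_add_signExp_toggle (hn : 1 ≤ n) (hB : IsBlock w B)
    (hodd : Odd (∑ i ∈ B, weight i (w i).castSucc)) (hc : IsAdmissible n c)
    (hcov : Covers w c) :
    Odd (signExp n hn c + signExp n hn (toggle w B c)) := by
  rw [signExp_eq_sum_weight hn hc, signExp_eq_sum_weight hn (isAdmissible_toggle hB hc hcov),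
    ← Finset.sum_add_distrib, Finset.sum_congr rfl fun i _ => weight_add_weight_toggle hcov i,
    Finset.sum_ite, ← Finset.mul_sum, Finset.filter_mem_eq_inter, Finset.univ_inter]
  exact hodd.add_even (even_two_mul _)

lemma sum_neg_one_pow_signExp_eq_zero_of_isBlock (hn : 1 ≤ n) (hB : IsBlock w B)
    (hodd : Odd (∑ i ∈ B, weight i (w i).castSucc)) :
    ∑ c ∈ Finset.univ.filter (fun c => IsAdmissible n c ∧ Covers w c),
      (-1 : ℤ) ^ signExp n hn c = 0 := by
  refine Finset.sum_neg_one_pow_eq_zero_of_involution (toggle w B) (fun c hc => ?_)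
    (fun _ _ => toggle_toggle) (fun c hc => ?_)
  all_goals obtain ⟨hadm, hcov⟩ := (Finset.mem_filter.1 hc).2
  · exact Finset.mem_filter.2 ⟨Finset.mem_univ _, isAdmissible_toggle hB hadm hcov,
      covers_toggle hcov⟩
  · exact odd_signExp_add_signExp_toggle hn hB hodd hadm hcov

lemma isBlock_singleton {p : Fin n} (h0 : p.val = 0 ∨ w p = 0) (h1 : p.val + 1 = n ∨ w p = 1) :
    IsBlock w {p} := by
  intro i h
  simp only [Finset.mem_singleton]
  constructor
  · rintro rfl
    have hw : w i = 1 := h1.resolve_left (by omega)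
    simp [hw, Fin.ext_iff]
  · rintro rfl
    have hw : w ⟨i.val + 1, h⟩ = 0 := h0.resolve_left (by simp)
    simp [hw, Fin.ext_iff]

lemma weight_singleton {p : Fin n} (h0 : p.val = 0 ∨ w p = 0) :
    weight p (w p).castSucc = 1 := by
  rcases (by decide : ∀ a : Fin 2, a = 0 ∨ a = 1) (w p) with hw | hw
  · simp [weight, hw]
  · simp [weight, hw, h0.resolve_right (by simp [hw])]

lemma isBlock_pair {j : Fin n} (h : j.val + 1 < n) (hj : w j = 0) (hj1 : w ⟨j.val + 1, h⟩ = 1) :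
    IsBlock w {j, ⟨j.val + 1, h⟩} := by
  intro i hi
  simp only [Finset.mem_insert, Finset.mem_singleton]
  constructor
  · rintro (rfl | rfl)
    · simp [hj]
    · simp [hj1, Fin.ext_iff]
      omega
  · rintro (hij | hij) <;> simp only [Fin.ext_iff] at hij
    · have hw : w ⟨i.val + 1, hi⟩ = 0 := by
        rwa [show (⟨i.val + 1, hi⟩ : Fin n) = j from Fin.ext hij]
      simp [hw, Fin.ext_iff]
      omega
    · have hij' : i = j := Fin.ext (by omega)
      subst hij'
      simp [hj1]

lemma weight_pair {j : Fin n} (h : j.val + 1 < n) (hj : w j = 0) (hj1 : w ⟨j.val + 1, h⟩ = 1) :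
    ∑ i ∈ {j, ⟨j.val + 1, h⟩}, weight i (w i).castSucc = 1 := by
  rw [Finset.sum_pair (by simp [Fin.ext_iff])]
  simp [weight, hj, hj1]

variable (w) in
lemma exists_isBlock (hn : 1 ≤ n) :
    ∃ B, IsBlock w B ∧ Odd (∑ i ∈ B, weight i (w i).castSucc) := by
  have eq_zero_of_ne_one : ∀ a : Fin 2, a ≠ 1 → a = 0 := by decide
  by_cases hy : ∃ k, ∃ hk : k < n, w ⟨k, hk⟩ = 1
  · obtain ⟨hk, hwk⟩ := Nat.find_spec hy
    rcases Nat.eq_zero_or_pos (Nat.find hy) with h0 | hpos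
    · refine ⟨{⟨Nat.find hy, hk⟩}, isBlock_singleton (.inl h0) (.inr hwk), ?_⟩
      rw [Finset.sum_singleton, weight_singleton (.inl h0)]
      exact odd_one
    · have h : Nat.find hy - 1 + 1 < n := by omega
      have hj : w ⟨Nat.find hy - 1, by omega⟩ = 0 := by
        refine eq_zero_of_ne_one _ fun hw => Nat.find_min hy (by omega : Nat.find hy - 1 < _) ?_
        exact ⟨_, hw⟩
      have hj1 : w ⟨Nat.find hy - 1 + 1, h⟩ = 1 := by
        simpa only [Nat.sub_add_cancel hpos] using hwk
      refine ⟨_, isBlock_pair h hj hj1, ?_⟩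
      rw [weight_pair h hj hj1]
      exact odd_one
  · push Not at hy
    have hl : n - 1 < n := by omega
    have hw : w ⟨n - 1, hl⟩ = 0 := eq_zero_of_ne_one _ (hy _ hl)
    refine ⟨{⟨n - 1, hl⟩}, isBlock_singleton (.inr hw) (.inl (by simp only; omega)), ?_⟩
    rw [Finset.sum_singleton, weight_singleton (.inr hw)]
    exact odd_one

variable (w) in
lemma sum_neg_one_pow_signExp_covers_eq_zero (hn : 1 ≤ n) :
    ∑ c ∈ Finset.univ.filter (fun c => IsAdmissible n c ∧ Covers w c),
      (-1 : ℤ) ^ signExp n hn c = 0 := by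
  obtain ⟨B, hB, hodd⟩ := exists_isBlock w hn
  exact sum_neg_one_pow_signExp_eq_zero_of_isBlock hn hB hodd

end

/-- The signed sum `Σ (-1)^d μ(a₁,…,aₙ)` over all admissible tuples with entries in
`{x, y, x+y}` vanishes, for any map `μ` additive in each of its `n` arguments. -/
theorem stmt_13 {A A' : Type*} [AddCommGroup A] [AddCommGroup A'] (n : ℕ) (hn : 1 ≤ n)
    (μ : MultilinearMap ℤ (fun _ : Fin n => A) A') (x y : A) :
    ∑ c ∈ Finset.univ.filter (IsAdmissible n),
      ((-1 : ℤ) ^ signExp n hn c) • μ (fun i => entryVal x y (c i)) = 0 := by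
  have hexpand (c : Fin n → Fin 3) : μ (fun i => entryVal x y (c i)) =
      ∑ r ∈ Fintype.piFinset (fun i => letters (c i)), μ (fun i => ![x, y] (r i)) := by
    simp_rw [entryVal_eq_sum_letters]
    exact μ.map_sum_finset _ _
  calc _ = ∑ c ∈ Finset.univ.filter (IsAdmissible n),
          ∑ r ∈ Fintype.piFinset (fun i => letters (c i)),
            ((-1 : ℤ) ^ signExp n hn c) • μ (fun i => ![x, y] (r i)) := by
        simp_rw [hexpand, Finset.smul_sum]
    _ = ∑ r : Fin n → Fin 2,
          ∑ c ∈ Finset.univ.filter (fun c => IsAdmissible n c ∧ Covers r c),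
            ((-1 : ℤ) ^ signExp n hn c) • μ (fun i => ![x, y] (r i)) :=
        Finset.sum_comm' fun c r => by
          simp only [Finset.mem_filter, Finset.mem_univ, true_and, and_true, Fintype.mem_piFinset]
          rfl
    _ = 0 := by
        simp_rw [← Finset.sum_smul, sum_neg_one_pow_signExp_covers_eq_zero _ hn, zero_smul,
          Finset.sum_const_zero]
end

section
/- Let K be a commutative ring, R a K-algebra, p ∈ R, and R' = R⟨q | pqp = p⟩ (the K-algebra obtained from R by freely adjoining an element q subject to pqp = p). Then R' admits a K-algebra endomorphism φ fixing the image of R and sending q to qpq, and φ is idempotent (φ ∘ φ = φ). -/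
/-!
If `b` is an inner inverse of `a` (`a b a = a`), then so is `b a b`, and moreover
`b a b` is reflexive (`(b a b) a (b a b) = b a b`). The first fact lets the universal property
produce `φ` with `φ q = q p q`; the second shows `φ ∘ φ` and `φ` agree on `R` and on `q`, so they
coincide by the uniqueness half of the universal property.
-/

universe u v w

section InnerInverse

variable {M : Type*} [Semigroup M] {a b : M}

theorem inner_inverse_mul_mul (h : a * b * a = a) : a * (b * a * b) * a = a :=
  calc a * (b * a * b) * a = (a * b * a) * (b * a) := by simp only [mul_assoc]
    _ = a := by rw [h, ← mul_assoc, h]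

theorem mul_mul_reflexive_of_inner_inverse (h : a * b * a = a) :
    b * a * b * a * (b * a * b) = b * a * b :=
  calc b * a * b * a * (b * a * b) = b * ((a * b * a) * b * a) * b := by simp only [mul_assoc]
    _ = b * a * b := by rw [h, h]

end InnerInverse

/-- Let `R'` be the `K`-algebra `R⟨q ∣ pqp = p⟩`, presented by its universal property:
it comes with a canonical map `ι : R → R'` and an element `q` satisfying `ιp * q * ιp = ιp`,
universal among such data.  Then `R'` admits an idempotent `K`-algebra endomorphism `φ`
fixing the image of `R` and sending `q` to `q * ιp * q`. -/
theorem stmt_18 {K : Type u} [CommRing K] {R : Type v} [Ring R] [Algebra K R]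
    {R' : Type w} [Ring R'] [Algebra K R'] (p : R) (ι : R →ₐ[K] R') (q : R')
    (hrel : ι p * q * ι p = ι p)
    (huniv : ∀ (S : Type w) [Ring S] [Algebra K S] (f : R →ₐ[K] S) (q' : S),
      f p * q' * f p = f p →
        ∃! g : R' →ₐ[K] S, (∀ r : R, g (ι r) = f r) ∧ g q = q') :
    ∃ φ : R' →ₐ[K] R',
      (∀ r : R, φ (ι r) = ι r) ∧ φ q = q * ι p * q ∧ φ.comp φ = φ := by
  obtain ⟨φ, ⟨hφι, hφq⟩, huniq⟩ := huniv R' ι (q * ι p * q) (inner_inverse_mul_mul hrel)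
  refine ⟨φ, hφι, hφq, huniq _ ⟨fun r => by simp [hφι], ?_⟩⟩
  show φ (φ q) = q * ι p * q
  rw [hφq, map_mul, map_mul, hφι, hφq, mul_mul_reflexive_of_inner_inverse hrel]
end
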